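/- Fix a factor index k and symmetric matrices D₁,…,D_r at which V := I_n + ∑_{k=1}^r ∑_{j=1}^{l_k} Z_{(k,j)}·D_k·Z_{(k,j)}ᵀ is positive definite. Regard the log-likelihood l as a function of the unrestricted q_k×q_k matrix argument D_k, all other quantities held fixed. Then this function is differentiable at the given symmetric D_k, and its matrix of partial derivatives — the q_k×q_k matrix whose (m,n) entry is ∂l/∂(D_k)_{m,n} — equals (1/2)·∑_{j=1}^{l_k} Z_{(k,j)}ᵀ·V⁻¹·(σ⁻²·e·eᵀ − V)·V⁻¹·Z_{(k,j)}. -/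

import Mathlib

/-!
Changing `D_k` to `W` moves `V` along the affine map `W ↦ V + ∑_j Z_j (W - D_k) Z_jᵀ`, so the
partial derivatives of `l` are directional derivatives of `V ↦ l(V)` in the directions
`H = ∑_j Z_j E_{ab} Z_jᵀ`. Along a line, `(V + tH)⁻¹` has derivative `-V⁻¹HV⁻¹` and Jacobi's
formula gives `tr (V⁻¹H)` for `log det (V + tH)`; both combine to `½ tr (G H)` with
`G = V⁻¹(σ⁻² e eᵀ - V)V⁻¹`, and since `G` is symmetric, `tr (G Z E_{ab} Zᵀ) = (Zᵀ G Z)_{ab}`.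
-/

open Matrix

-- Any norm would do; an operator norm makes square matrices a normed algebra, as the derivative of
-- `Ring.inverse` requires.
attribute [local instance] Matrix.linftyOpNormedAddCommGroup Matrix.linftyOpNormedSpace
  Matrix.linftyOpNormedRing Matrix.linftyOpNormedAlgebra

theorem IsLinearMap.differentiable {𝕜 E F : Type*} [NontriviallyNormedField 𝕜] [CompleteSpace 𝕜]
    [NormedAddCommGroup E] [NormedSpace 𝕜 E] [FiniteDimensional 𝕜 E]
    [NormedAddCommGroup F] [NormedSpace 𝕜 F] {g : E → F} (hg : IsLinearMap 𝕜 g) :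
    Differentiable 𝕜 g :=
  (LinearMap.toContinuousLinearMap (hg.mk' g)).differentiable

namespace Matrix

section Calculus

variable {n : Type*} [Fintype n] [DecidableEq n]

section NontriviallyNormedField

variable {𝕜 : Type*} [NontriviallyNormedField 𝕜]

theorem differentiable_det [CompleteSpace 𝕜] : Differentiable 𝕜 (det : Matrix n n 𝕜 → 𝕜) := by
  have hentry (i j : n) : Differentiable 𝕜 fun M : Matrix n n 𝕜 => M i j :=
    IsLinearMap.differentiable ⟨fun _ _ => rfl, fun _ _ => rfl⟩
  simp_rw [_root_.funext det_apply']
  fun_prop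

open Polynomial in
theorem hasDerivAt_det_one_add_smul (M : Matrix n n 𝕜) :
    HasDerivAt (fun t : 𝕜 => (1 + t • M).det) M.trace 0 := by
  have h := (det (1 + (X : 𝕜[X]) • M.map C)).hasDerivAt 0
  rw [derivative_det_one_add_X_smul] at h
  convert h using 1
  ext t
  rw [← coe_evalRingHom, RingHom.map_det]
  congr 1
  ext i j
  by_cases hij : i = j <;> simp [hij, mul_comm t]

theorem hasDerivAt_det_add_smul {A : Matrix n n 𝕜} (H : Matrix n n 𝕜) (hA : IsUnit A) :
    HasDerivAt (fun t : 𝕜 => (A + t • H).det) (A.det * (A⁻¹ * H).trace) 0 := by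
  have hfactor (t : 𝕜) : (A + t • H).det = A.det * (1 + t • (A⁻¹ * H)).det := by
    rw [← det_mul, Matrix.mul_add, Matrix.mul_one, Matrix.mul_smul, ← Matrix.mul_assoc,
      mul_nonsing_inv _ ((isUnit_iff_isUnit_det A).mp hA), Matrix.one_mul]
  simp_rw [hfactor]
  exact (hasDerivAt_det_one_add_smul _).const_mul _

end NontriviallyNormedField

theorem hasFDerivAt_inv {𝕜 : Type*} [RCLike 𝕜] {A : Matrix n n 𝕜} (hA : IsUnit A) :
    HasFDerivAt (fun M : Matrix n n 𝕜 => M⁻¹)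
      (-ContinuousLinearMap.mulLeftRight 𝕜 _ A⁻¹ A⁻¹) A := by
  have h := hasFDerivAt_ringInverse (𝕜 := 𝕜) hA.unit
  have hinv : ((hA.unit⁻¹ : (Matrix n n 𝕜)ˣ) : Matrix n n 𝕜) = A⁻¹ := by
    rw [nonsing_inv_eq_ringInverse, ← Ring.inverse_unit hA.unit, IsUnit.unit_spec]
  simp only [IsUnit.unit_spec, hinv] at h
  simpa only [nonsing_inv_eq_ringInverse] using h

end Calculus

variable {R n m : Type*}

theorem isLinearMap_dotProduct_mulVec [CommSemiring R] [Fintype n] (e : n → R) :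
    IsLinearMap R fun N : Matrix n n R => e ⬝ᵥ (N *ᵥ e) :=
  ⟨fun _ _ => by simp [add_mulVec], fun _ _ => by simp [smul_mulVec]⟩

theorem isLinearMap_sum_mul_of_mul_transpose [CommRing R] [Fintype m] {ι : Type*} [Fintype ι]
    (Z : ι → Matrix n m R) :
    IsLinearMap R fun W : m × m → R => ∑ j, Z j * of (fun a b => W (a, b)) * (Z j)ᵀ :=
  ⟨fun W W' => by
      change ∑ j, Z j * (of (fun a b => W (a, b)) + of fun a b => W' (a, b)) * (Z j)ᵀ = _
      simp only [Matrix.mul_add, Matrix.add_mul, Finset.sum_add_distrib],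
    fun c W => by
      change ∑ j, Z j * (c • of fun a b => W (a, b)) * (Z j)ᵀ = _
      simp only [Matrix.mul_smul, Matrix.smul_mul, Finset.smul_sum]⟩

theorem IsSymm.mul_mul_transpose [CommSemiring R] [Fintype n] {B : Matrix n n R}
    (hB : B.IsSymm) (A : Matrix m n R) : (A * B * Aᵀ).IsSymm := by
  simp [IsSymm, transpose_mul, hB.eq, Matrix.mul_assoc]

theorem of_pi_single_prod [Zero R] [DecidableEq n] [DecidableEq m] (a : n) (b : m) (c : R) :
    of (fun i j => (Pi.single (a, b) c : n × m → R) (i, j)) = single a b c := by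
  ext i j
  simp [Pi.single_apply, single, Prod.ext_iff, eq_comm]

theorem trace_vecMulVec_mul [CommSemiring R] [Fintype n] (u v : n → R) (N : Matrix n n R) :
    trace (vecMulVec u v * N) = v ⬝ᵥ (N *ᵥ u) := by
  rw [vecMulVec_mul, trace_vecMulVec, dotProduct_comm, dotProduct_mulVec]

theorem trace_mul_mul_single_mul_transpose [CommSemiring R] [Fintype n] [Fintype m]
    [DecidableEq m] {G : Matrix n n R} (hG : G.IsSymm) (Z : Matrix n m R) (a b : m) :
    trace (G * (Z * single a b (1 : R) * Zᵀ)) = (Zᵀ * G * Z) a b := by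
  have hsymm : (Zᵀ * G * Z).IsSymm := by
    simpa using hG.mul_mul_transpose Zᵀ
  rw [← Matrix.mul_assoc, trace_mul_cycle, ← Matrix.mul_assoc, trace_mul_single, hsymm.apply]
  simp

theorem sum_sum_update_mul_transpose [Ring R] {κ : Type*} [Fintype κ] [DecidableEq κ]
    {l q : κ → Type*} [∀ k, Fintype (l k)] [∀ k, Fintype (q k)]
    (Z : (k : κ) → l k → Matrix n (q k) R) (D : (k : κ) → Matrix (q k) (q k) R)
    (k : κ) (M : Matrix (q k) (q k) R) :
    ∑ k', ∑ j, Z k' j * Function.update D k M k' * (Z k' j)ᵀ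
      = ∑ k', ∑ j, Z k' j * D k' * (Z k' j)ᵀ + ∑ j, Z k j * (M - D k) * (Z k j)ᵀ := by
  rw [← sub_eq_iff_eq_add', ← Finset.sum_sub_distrib, Finset.sum_eq_single k]
  · simp [Matrix.mul_sub, Matrix.sub_mul]
  · intro k' _ hk'
    simp [Function.update_of_ne hk']
  · simp

end Matrix

section LogLikelihood

variable {n : Type*} [Fintype n] [DecidableEq n]

/-- The log-likelihood `l` as a function of `V`. -/
noncomputable def logLik (σ : ℝ) (e : n → ℝ) (V : Matrix n n ℝ) : ℝ :=
  -(1 / 2) * (Fintype.card n * Real.log (σ ^ 2) + (σ ^ 2)⁻¹ * (e ⬝ᵥ (V⁻¹ *ᵥ e)) + Real.log V.det)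

theorem differentiableAt_logLik (σ : ℝ) (e : n → ℝ) {M : Matrix n n ℝ} (hM : M.det ≠ 0) :
    DifferentiableAt ℝ (logLik σ e) M := by
  have hinv := (hasFDerivAt_inv ((isUnit_iff_isUnit_det M).mpr hM.isUnit)).differentiableAt
  have hquad := (isLinearMap_dotProduct_mulVec e).differentiable.differentiableAt.comp M hinv
  exact (((differentiableAt_const _).add (hquad.const_mul _)).add
    ((differentiable_det M).log hM)).const_mul _

theorem trace_inv_mul_sub_mul_inv_mul (c : ℝ) (e : n → ℝ) {M : Matrix n n ℝ} (H : Matrix n n ℝ)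
    (hM : IsUnit M.det) :
    trace (M⁻¹ * (c • vecMulVec e e - M) * M⁻¹ * H)
      = c * (e ⬝ᵥ ((M⁻¹ * H * M⁻¹) *ᵥ e)) - trace (M⁻¹ * H) := by
  have hquad : trace (M⁻¹ * vecMulVec e e * M⁻¹ * H) = e ⬝ᵥ ((M⁻¹ * H * M⁻¹) *ᵥ e) := by
    rw [Matrix.mul_assoc, Matrix.mul_assoc, trace_mul_comm, Matrix.mul_assoc, trace_vecMulVec_mul]
  rw [Matrix.mul_sub, Matrix.sub_mul, Matrix.sub_mul, trace_sub, Matrix.mul_smul, Matrix.smul_mul,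
    Matrix.smul_mul, trace_smul, hquad, nonsing_inv_mul _ hM, Matrix.one_mul, smul_eq_mul]

theorem hasDerivAt_logLik_add_smul (σ : ℝ) (e : n → ℝ) {M : Matrix n n ℝ} (H : Matrix n n ℝ)
    (hM : M.det ≠ 0) :
    HasDerivAt (fun t : ℝ => logLik σ e (M + t • H))
      ((1 / 2) * trace (M⁻¹ * ((σ ^ 2)⁻¹ • vecMulVec e e - M) * M⁻¹ * H)) 0 := by
  have hMu : IsUnit M := (isUnit_iff_isUnit_det M).mpr hM.isUnit
  have hline : HasDerivAt (fun t : ℝ => M + t • H) H 0 := by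
    have h := ((hasDerivAt_id (0 : ℝ)).smul_const H).const_add M
    rwa [one_smul] at h
  have hquad : HasDerivAt (fun t : ℝ => e ⬝ᵥ ((M + t • H)⁻¹ *ᵥ e))
      (-(e ⬝ᵥ ((M⁻¹ * H * M⁻¹) *ᵥ e))) 0 := by
    have hinv := (hasFDerivAt_inv hMu).comp_hasDerivAt_of_eq 0 hline (by simp)
    exact ((isLinearMap_dotProduct_mulVec e).mk'.toContinuousLinearMap.hasFDerivAt.comp_hasDerivAt
      0 hinv).congr_deriv (by
        change e ⬝ᵥ (-(M⁻¹ * H * M⁻¹) *ᵥ e) = _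
        rw [neg_mulVec, dotProduct_neg])
  have hlogdet : HasDerivAt (fun t : ℝ => Real.log (M + t • H).det) (M⁻¹ * H).trace 0 := by
    simpa [hM] using (hasDerivAt_det_add_smul H hMu).log (by simpa using hM)
  rw [trace_inv_mul_sub_mul_inv_mul _ _ _ hM.isUnit]
  exact ((((hquad.const_mul (σ ^ 2)⁻¹).const_add (Fintype.card n * Real.log (σ ^ 2))).add
    hlogdet).const_mul (-(1 / 2))).congr_deriv (by ring)

variable {E : Type*} [NormedAddCommGroup E] [NormedSpace ℝ E] [FiniteDimensional ℝ E]

theorem differentiableAt_logLik_add_comp_sub (σ : ℝ) (e : n → ℝ) {M : Matrix n n ℝ}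
    (hM : M.det ≠ 0) {S : E → Matrix n n ℝ} (hS : IsLinearMap ℝ S) (x₀ : E) :
    DifferentiableAt ℝ (fun x => logLik σ e (M + S (x - x₀))) x₀ := by
  have hSdiff : Differentiable ℝ S := hS.differentiable
  refine (differentiableAt_logLik σ e ?_).comp x₀ (by fun_prop)
  rwa [sub_self, hS.map_zero, add_zero]

theorem fderiv_logLik_add_comp_sub (σ : ℝ) (e : n → ℝ) {M : Matrix n n ℝ}
    (hM : M.det ≠ 0) {S : E → Matrix n n ℝ} (hS : IsLinearMap ℝ S) (x₀ v : E) :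
    fderiv ℝ (fun x => logLik σ e (M + S (x - x₀))) x₀ v
      = (1 / 2) * trace (M⁻¹ * ((σ ^ 2)⁻¹ • vecMulVec e e - M) * M⁻¹ * S v) := by
  have hline : HasLineDerivAt ℝ (fun x => logLik σ e (M + S (x - x₀)))
      ((1 / 2) * trace (M⁻¹ * ((σ ^ 2)⁻¹ • vecMulVec e e - M) * M⁻¹ * S v)) x₀ v := by
    simpa [HasLineDerivAt, hS.map_smul] using hasDerivAt_logLik_add_smul σ e (S v) hM
  rw [← (differentiableAt_logLik_add_comp_sub σ e hM hS x₀).lineDeriv_eq_fderiv, hline.lineDeriv]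

end LogLikelihood

theorem stmt2 (n r : ℕ) (σ : ℝ) (e : Fin n → ℝ)
    (l q : Fin r → ℕ)
    (Z : (k : Fin r) → Fin (l k) → Matrix (Fin n) (Fin (q k)) ℝ)
    (D : (k : Fin r) → Matrix (Fin (q k)) (Fin (q k)) ℝ)
    (k : Fin r)
    (V : Matrix (Fin n) (Fin n) ℝ)
    (hV : V = 1 + ∑ k', ∑ j, Z k' j * D k' * (Z k' j)ᵀ)
    (hVpd : V.PosDef)
    (f : ((Fin (q k) × Fin (q k)) → ℝ) → ℝ)
    -- `f W` is the log-likelihood `l` evaluated with `D_k` replaced by the matrix `W`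
    (hf : f = fun W =>
      -(1 / 2 : ℝ) * ((n : ℝ) * Real.log (σ ^ 2)
        + (σ ^ 2)⁻¹ *
          (e ⬝ᵥ ((1 + ∑ k', ∑ j,
            Z k' j * Function.update D k (Matrix.of fun i j' => W (i, j')) k' * (Z k' j)ᵀ)⁻¹ *ᵥ e))
        + Real.log (1 + ∑ k', ∑ j,
            Z k' j * Function.update D k (Matrix.of fun i j' => W (i, j')) k' * (Z k' j)ᵀ).det)) :
    DifferentiableAt ℝ f (fun p => D k p.1 p.2) ∧
    ∀ a b : Fin (q k),
      fderiv ℝ f (fun p => D k p.1 p.2) (Pi.single (a, b) 1) =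
        ((1 / 2 : ℝ) •
          ∑ j, (Z k j)ᵀ * V⁻¹ * ((σ ^ 2)⁻¹ • vecMulVec e e - V) * V⁻¹ * Z k j) a b := by
  set S : (Fin (q k) × Fin (q k) → ℝ) → Matrix (Fin n) (Fin n) ℝ :=
    fun W => ∑ j, Z k j * of (fun a b => W (a, b)) * (Z k j)ᵀ
  have hVdet : V.det ≠ 0 := hVpd.det_pos.ne'
  have hfS : f = fun W => logLik σ e (V + S (W - fun p => D k p.1 p.2)) := by
    rw [hf, hV]
    funext W
    simp only [logLik, sum_sum_update_mul_transpose, add_assoc, Fintype.card_fin]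
    rfl
  have hS : IsLinearMap ℝ S := isLinearMap_sum_mul_of_mul_transpose (Z k)
  refine ⟨hfS ▸ differentiableAt_logLik_add_comp_sub σ e hVdet hS _, fun a b => ?_⟩
  have hVsymm : V.IsSymm := hVpd.isHermitian
  have hG : (V⁻¹ * ((σ ^ 2)⁻¹ • vecMulVec e e - V) * V⁻¹).IsSymm := by
    simpa [hVsymm.inv.eq] using
      ((IsSymm.smul (transpose_vecMulVec e e) _).sub hVsymm).mul_mul_transpose V⁻¹
  rw [hfS, fderiv_logLik_add_comp_sub σ e hVdet hS]
  simp only [S, of_pi_single_prod, Matrix.mul_sum, trace_sum,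
    trace_mul_mul_single_mul_transpose hG]
  simp [Matrix.sum_apply, Matrix.mul_assoc]
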